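/- arXiv:1206.6027 — 3 statements merged into one kernel-verified Lean document; each statement's English description precedes it below -/
import Mathlib

section
/- The two-sided ideal C of F̄ = K⟨X ∪ {t}⟩ generated by all homogeneous elements f with φ(f) = 0 (the largest graded ideal contained in ker φ) is generated, as a two-sided ideal, by the commutators [x_i, t] = x_i t − t x_i for all x_i ∈ X. -/
noncomputable section

/-! ### Common definitions for the letterplace correspondence (La Scala)

`FA K Y` is the free associative algebra `K⟨Y⟩` (monoid algebra of the free monoid on `Y`);
`PL K Y` is the letterplace polynomial algebra `K[y(j) : y ∈ Y, j ∈ ℕ*]`.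
The algebra `F̄ = K⟨X ∪ {t}⟩` is modeled as `FA K (Option X)` with `t = none`,
and similarly `P̄ = PL K (Option X)`. -/

/-- The free associative algebra `K⟨Y⟩`. -/
abbrev FA (K : Type*) [CommSemiring K] (Y : Type*) := MonoidAlgebra K (FreeMonoid Y)

/-- The letterplace polynomial algebra `K[y(j)]`, with places in `ℕ* = ℕ+`. -/
abbrev PL (K : Type*) [CommSemiring K] (Y : Type*) := MvPolynomial (Y × ℕ+) K

variable (K : Type*) [Field K]

/-- The generator of `K⟨Y⟩` corresponding to a letter. -/
def gen {Y : Type*} (y : Y) : FA K Y := MonoidAlgebra.of K (FreeMonoid Y) (FreeMonoid.of y)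

/-- The extra letter `t` of `F̄ = K⟨X ∪ {t}⟩`. -/
def tv {X : Type*} : FA K (Option X) := gen K (none : Option X)

/-- `φ : F̄ → F̄`, the algebra endomorphism with `φ(x_i) = x_i`, `φ(t) = 1`. -/
def phi {X : Type*} : FA K (Option X) →ₐ[K] FA K (Option X) :=
  (MonoidAlgebra.lift K (FA K (Option X)) (FreeMonoid (Option X)))
    (FreeMonoid.lift fun o => Option.elim o 1 (fun x => gen K (some x)))

/-- `f` is homogeneous of degree `d` (all words in its support have length `d`). -/
def IsHomog {Y : Type*} (d : ℕ) (f : FA K Y) : Prop :=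
  ∀ w ∈ f.coeff.support, FreeMonoid.length w = d

/-- The homogeneous component of degree `d` of `f ∈ K⟨Y⟩`. -/
def homComp {Y : Type*} (d : ℕ) (f : FA K Y) : FA K Y :=
  ∑ w ∈ f.coeff.support.filter (fun w => FreeMonoid.length w = d), MonoidAlgebra.single w (f.coeff w)

/-- A two-sided ideal is graded (for the grading by total degree) iff it contains all
homogeneous components of its elements. -/
def IsGradedF {Y : Type*} (I : TwoSidedIdeal (FA K Y)) : Prop := ∀ f ∈ I, ∀ d, homComp K d f ∈ I

/-- `C ⊆ F̄`: the two-sided ideal generated by all homogeneous elements of `ker φ`,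
i.e. the largest graded ideal contained in `ker φ`. -/
def Cideal {X : Type*} : TwoSidedIdeal (FA K (Option X)) :=
  TwoSidedIdeal.span {f | (∃ d, IsHomog K d f) ∧ phi K f = 0}

/-- The embedding of free monoids `X* → (X ∪ {t})*`. -/
def embWord {X : Type*} : FreeMonoid X →* FreeMonoid (Option X) := FreeMonoid.map some

/-- The canonical embedding `F = K⟨X⟩ → F̄ = K⟨X ∪ {t}⟩`. -/
def emb {X : Type*} : FA K X →ₐ[K] FA K (Option X) :=
  (MonoidAlgebra.lift K (FA K (Option X)) (FreeMonoid X))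
    ((MonoidAlgebra.of K (FreeMonoid (Option X))).comp embWord)

/-- The top degree `deg(f)` of `f` (max length of a word in the support). -/
def degF {Y : Type*} (f : FA K Y) : ℕ := f.coeff.support.sup FreeMonoid.length

/-- The homogenization `f^* = Σ_k f_k t^{deg f − k} ∈ F̄` of `f ∈ F`. -/
def hstar {X : Type*} (f : FA K X) : FA K (Option X) :=
  ∑ w ∈ f.coeff.support,
    MonoidAlgebra.single
      (embWord w * (FreeMonoid.of (none : Option X)) ^ (degF K f - FreeMonoid.length w)) (f.coeff w)

/-- Homogenization of an element already written in `F̄` (used for elements of `φ(F̄) = F`). -/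
def hstarO {X : Type*} (f : FA K (Option X)) : FA K (Option X) :=
  ∑ w ∈ f.coeff.support,
    MonoidAlgebra.single
      (w * (FreeMonoid.of (none : Option X)) ^ (degF K f - FreeMonoid.length w)) (f.coeff w)

/-- The homogenization `I^*` of an ideal `I ⊆ F`: the two-sided ideal of `F̄` generated by all
homogeneous elements of `φ⁻¹(I)` (identifying `F` with its image in `F̄`). -/
def hstarIdeal {X : Type*} (I : TwoSidedIdeal (FA K X)) : TwoSidedIdeal (FA K (Option X)) :=
  TwoSidedIdeal.span {g | (∃ d, IsHomog K d g) ∧ ∃ f ∈ I, phi K g = emb K f}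

/-- The saturation `Sat(J) = φ(J)^*` of a graded ideal `C ⊆ J ⊆ F̄`: the two-sided ideal
generated by all homogeneous elements `g` with `φ(g) ∈ φ(J)`. -/
def SatF {X : Type*} (J : TwoSidedIdeal (FA K (Option X))) : TwoSidedIdeal (FA K (Option X)) :=
  TwoSidedIdeal.span {g | (∃ d, IsHomog K d g) ∧ ∃ h ∈ J, phi K g = phi K h}

/-! ### The commutative (letterplace) side -/

/-- The shift of letterplace variables: `k · y(j) = y(j + k)`. -/
def shiftVar {Y : Type*} (k : ℕ) (p : Y × ℕ+) : Y × ℕ+ :=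
  (p.1, ⟨p.2 + k, Nat.add_pos_left p.2.2 k⟩)

/-- The action of `k ∈ ℕ` on the letterplace algebra. -/
def shift {Y : Type*} (k : ℕ) : PL K Y →ₐ[K] PL K Y := MvPolynomial.rename (shiftVar k)

/-- An ideal of `PL K Y` is an ℕ-ideal if it is stable under all shifts. -/
def IsNIdeal {Y : Type*} (I : Ideal (PL K Y)) : Prop := ∀ k, ∀ f ∈ I, shift K k f ∈ I

/-- The ℕ-ideal `⟨S⟩_ℕ` generated by a set `S`. -/
def nspan {Y : Type*} (S : Set (PL K Y)) : Ideal (PL K Y) :=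
  Ideal.span {g | ∃ k, ∃ f ∈ S, g = shift K k f}

/-- The place multidegree `∂(m)` of a monomial. -/
def placeDeg {Y : Type*} (m : (Y × ℕ+) →₀ ℕ) : ℕ+ →₀ ℕ := Finsupp.mapDomain Prod.snd m

/-- `f` is multihomogeneous of place multidegree `μ`. -/
def IsMultiHomog {Y : Type*} (μ : ℕ+ →₀ ℕ) (f : PL K Y) : Prop :=
  ∀ m ∈ f.support, placeDeg m = μ

/-- The multihomogeneous component of multidegree `μ` of `f`. -/
def mComp {Y : Type*} (μ : ℕ+ →₀ ℕ) (f : PL K Y) : PL K Y :=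
  ∑ m ∈ f.support.filter (fun m => placeDeg m = μ),
    MvPolynomial.monomial m (MvPolynomial.coeff m f)

/-- An ideal is multigraded iff it contains all multihomogeneous components of its elements. -/
def IsMultiGraded {Y : Type*} (I : Ideal (PL K Y)) : Prop := ∀ f ∈ I, ∀ μ, mComp K μ f ∈ I

/-- `ψ : P̄ → P̄`, with `ψ(x_i(j)) = x_i(j)` and `ψ(t(j)) = 1`. -/
def psi {X : Type*} : PL K (Option X) →ₐ[K] PL K (Option X) :=
  MvPolynomial.aeval (fun p => Option.elim p.1 1 (fun x => MvPolynomial.X (some x, p.2)))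

/-- The canonical embedding `P → P̄`. -/
def embP {X : Type*} : PL K X →ₐ[K] PL K (Option X) :=
  MvPolynomial.rename (fun p => (some p.1, p.2))

/-- The top multidegree `∂(f)` of `f` (componentwise max over the support). -/
def topDeg {Y : Type*} (f : PL K Y) : ℕ+ →₀ ℕ := f.support.sup placeDeg

/-- The pure-`t` monomial `∏_k t(k)^{ν_k}` with exponents `ν`. -/
def tExp {X : Type*} (ν : ℕ+ →₀ ℕ) : ((Option X) × ℕ+) →₀ ℕ :=
  Finsupp.mapDomain (fun k => ((none : Option X), k)) ν

/-- The multihomogenization `f^* = Σ_μ f_μ ∏_k t(k)^{ν_k − μ_k} ∈ P̄` of `f ∈ P`. -/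
def mhstar {X : Type*} (f : PL K X) : PL K (Option X) :=
  ∑ m ∈ f.support,
    MvPolynomial.monomial
      (Finsupp.mapDomain (fun p => ((some p.1 : Option X), p.2)) m +
        tExp (topDeg K f - placeDeg m))
      (MvPolynomial.coeff m f)

/-- Multihomogenization of an element already written in `P̄` (used for elements of `ψ(P̄) = P`). -/
def mhstarO {X : Type*} (f : PL K (Option X)) : PL K (Option X) :=
  ∑ m ∈ f.support,
    MvPolynomial.monomial (m + tExp (topDeg K f - placeDeg m)) (MvPolynomial.coeff m f)

/-- The multihomogenization `I^*` of an ℕ-ideal `I ⊆ P`: the ℕ-ideal of `P̄` generated by all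
multihomogeneous elements of `ψ⁻¹(I)` (identifying `P` with its image in `P̄`). -/
def mhstarIdeal {X : Type*} (I : Ideal (PL K X)) : Ideal (PL K (Option X)) :=
  nspan K {g | (∃ μ, IsMultiHomog K μ g) ∧ ∃ f ∈ I, psi K g = embP K f}

/-- The saturation `Sat(J) = ψ(J)^*` of a multigraded ℕ-ideal `J ⊆ P̄`. -/
def SatP {X : Type*} (J : Ideal (PL K (Option X))) : Ideal (PL K (Option X)) :=
  nspan K {g | (∃ μ, IsMultiHomog K μ g) ∧ ∃ h ∈ J, psi K g = psi K h}

/-! ### The letterplace embedding -/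

/-- Exponent vector of the letterplace monomial `y_1(n+1) y_2(n+2) ⋯` of a word. -/
def wordExpAux {Y : Type*} : ℕ → List Y → ((Y × ℕ+) →₀ ℕ)
  | _, [] => 0
  | n, y :: w => Finsupp.single (y, ⟨n + 1, n.succ_pos⟩) 1 + wordExpAux (n + 1) w

/-- The letterplace monomial `y_1(1) y_2(2) ⋯ y_d(d)` of a word `y_1 y_2 ⋯ y_d`. -/
def wordExp {Y : Type*} (w : FreeMonoid Y) : (Y × ℕ+) →₀ ℕ := wordExpAux 0 (FreeMonoid.toList w)

/-- The letterplace embedding `ι : K⟨Y⟩ → PL K Y` (a `K`-linear map). -/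
def iota {Y : Type*} (f : FA K Y) : PL K Y :=
  Finsupp.sum f.coeff fun w c => MvPolynomial.monomial (wordExp w) c

/-- The set `L` of multilinear elements of `PL K Y`: multihomogeneous elements of `V = Im ι`. -/
def Lset {Y : Type*} : Set (PL K Y) :=
  {f | f ∈ Set.range (iota K (Y := Y)) ∧ ∃ μ, IsMultiHomog K μ f}

/-- A letterplace ideal (`L`-ideal): an ℕ-ideal ℕ-generated by its multilinear elements. -/
def IsLPIdeal {Y : Type*} (J : Ideal (PL K Y)) : Prop :=
  IsNIdeal K J ∧ J = nspan K ((J : Set (PL K Y)) ∩ Lset K)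

/-- The generators `x_i(1)t(2) − t(1)x_i(2)` of `D`. -/
def Dgens (X : Type*) : Set (PL K (Option X)) :=
  {g | ∃ x : X,
    g = MvPolynomial.X ((some x : Option X), (1 : ℕ+)) *
          MvPolynomial.X ((none : Option X), (2 : ℕ+)) -
        MvPolynomial.X ((none : Option X), (1 : ℕ+)) *
          MvPolynomial.X ((some x : Option X), (2 : ℕ+))}

/-- The generators `ῑ([t, x_i]) = t(1)x_i(2) − x_i(1)t(2)` of `D`. -/
def DgensT (X : Type*) : Set (PL K (Option X)) :=
  {g | ∃ x : X,
    g = MvPolynomial.X ((none : Option X), (1 : ℕ+)) *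
          MvPolynomial.X ((some x : Option X), (2 : ℕ+)) -
        MvPolynomial.X ((some x : Option X), (1 : ℕ+)) *
          MvPolynomial.X ((none : Option X), (2 : ℕ+))}

/-- `D ⊆ P̄`: the letterplace analogue of `C`. -/
def Did (X : Type*) : Ideal (PL K (Option X)) := nspan K (Dgens K X)

/-- The product `∏_{d < k ≤ d'} t(k)`. -/
def tProd (X : Type*) (d d' : ℕ) : PL K (Option X) :=
  ∏ k ∈ Finset.range (d' - d), MvPolynomial.X ((none : Option X), ⟨d + k + 1, Nat.succ_pos _⟩)

/-- The `L`-saturation `Sat_L(J)` of a letterplace ideal `D ⊆ J ⊆ P̄`. -/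
def SatL {X : Type*} (J : Ideal (PL K (Option X))) : Ideal (PL K (Option X)) :=
  nspan K {f | f ∈ Lset K ∧ ∃ d', MvPolynomial.totalDegree f ≤ d' ∧
    tProd K X (MvPolynomial.totalDegree f) d' * f ∈ J}

/-- `J` is `L`-saturated: `t(d+1)·f ∈ J` with `f` multilinear of degree `d` implies `f ∈ J`. -/
def IsLSat {X : Type*} (J : Ideal (PL K (Option X))) : Prop :=
  ∀ f ∈ Lset K (Y := Option X),
    MvPolynomial.X ((none : Option X), ⟨MvPolynomial.totalDegree f + 1, Nat.succ_pos _⟩) * f ∈ J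
      → f ∈ J

/-! ### Monomial orderings -/

/-- The shift action on letterplace monomials. -/
def shiftMon {Y : Type*} (k : ℕ) (m : (Y × ℕ+) →₀ ℕ) : (Y × ℕ+) →₀ ℕ :=
  Finsupp.mapDomain (shiftVar k) m

/-- A monomial ordering of a (possibly infinite) commutative polynomial ring, given as a strict
order relation on exponent vectors: a well-founded strict total order with `1` minimal,
compatible with multiplication of monomials. -/
structure IsMonOrd {σ : Type*} (r : (σ →₀ ℕ) → (σ →₀ ℕ) → Prop) : Prop where
  total : ∀ m n, r m n ∨ m = n ∨ r n m
  irrefl : ∀ m, ¬ r m m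
  trans : ∀ a b c, r a b → r b c → r a c
  wf : WellFounded r
  zero_min : ∀ m, ¬ r m 0
  add_compat : ∀ m n u, r m n → r (u + m) (u + n)

/-- The ordering is compatible with the ℕ-action (an `ℕ`-ordering). -/
def IsNCompat {Y : Type*} (r : ((Y × ℕ+) →₀ ℕ) → ((Y × ℕ+) →₀ ℕ) → Prop) : Prop :=
  ∀ (k : ℕ) m n, r m n → r (shiftMon k m) (shiftMon k n)

/-- The weight of a letterplace monomial: the largest place index occurring in it
(`⊥ = -∞` for the monomial `1`). -/
def wt {Y : Type*} (m : (Y × ℕ+) →₀ ℕ) : WithBot ℕ :=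
  m.support.sup (fun p => ((p.2 : ℕ) : WithBot ℕ))

/-- A weighted ordering: smaller weight implies smaller monomial. -/
def IsWeighted {Y : Type*} (r : ((Y × ℕ+) →₀ ℕ) → ((Y × ℕ+) →₀ ℕ) → Prop) : Prop :=
  ∀ m n, wt m < wt n → r m n

/-- A monomial ordering of the free algebra `K⟨Y⟩`: a well-founded strict total order on words
compatible with two-sided multiplication. -/
structure IsWordOrd {Y : Type*} (r : FreeMonoid Y → FreeMonoid Y → Prop) : Prop where
  total : ∀ m n, r m n ∨ m = n ∨ r n m
  irrefl : ∀ m, ¬ r m m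
  trans : ∀ a b c, r a b → r b c → r a c
  wf : WellFounded r
  mul_compat : ∀ m n u v, r m n → r (u * m * v) (u * n * v)

/-- A word ordering is graded if shorter words are smaller. -/
def IsGradedWordOrd {Y : Type*} (r : FreeMonoid Y → FreeMonoid Y → Prop) : Prop :=
  ∀ m n, FreeMonoid.length m < FreeMonoid.length n → r m n

/-- The word ordering of `K⟨Y⟩` induced by a monomial ordering of `PL K Y` via `ι`. -/
def inducedWordOrd {Y : Type*} (r : ((Y × ℕ+) →₀ ℕ) → ((Y × ℕ+) →₀ ℕ) → Prop)
    (m n : FreeMonoid Y) : Prop := r (wordExp m) (wordExp n)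

/-- The factor of a letterplace monomial at place `j` (a monomial of `P(j) ≅ P(1)`). -/
def fiber {Y : Type*} (m : (Y × ℕ+) →₀ ℕ) (j : ℕ+) : Y →₀ ℕ :=
  Finsupp.comapDomain (fun y => (y, j)) m (fun _ _ _ _ h => congrArg Prod.fst h)

/-- The place `ℕ`-ordering of `PL K Y` induced by a monomial ordering `r1` of `P(1)`:
compare the factors at the highest place where the two monomials differ. -/
def placeExt {Y : Type*} (r1 : (Y →₀ ℕ) → (Y →₀ ℕ) → Prop)
    (m n : (Y × ℕ+) →₀ ℕ) : Prop :=
  ∃ j : ℕ+, r1 (fiber m j) (fiber n j) ∧ ∀ j', j < j' → fiber m j' = fiber n j'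

/-! ### Leading monomials and Gröbner bases -/

/-- `m` is the leading monomial of `f ∈ PL K Y` with respect to the ordering `r`. -/
def IsLM {Y : Type*} (r : ((Y × ℕ+) →₀ ℕ) → ((Y × ℕ+) →₀ ℕ) → Prop)
    (f : PL K Y) (m : (Y × ℕ+) →₀ ℕ) : Prop :=
  m ∈ f.support ∧ ∀ m' ∈ f.support, m' ≠ m → r m' m

/-- `LM(S)`: the ideal generated by the leading monomials of the nonzero elements of `S`. -/
def LMideal {Y : Type*} (r : ((Y × ℕ+) →₀ ℕ) → ((Y × ℕ+) →₀ ℕ) → Prop)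
    (S : Set (PL K Y)) : Ideal (PL K Y) :=
  Ideal.span {p | ∃ f ∈ S, f ≠ 0 ∧ ∃ m, IsLM K r f m ∧ p = MvPolynomial.monomial m (1 : K)}

/-- The ideal generated by `ℕ·lm(G)`. -/
def shLMideal {Y : Type*} (r : ((Y × ℕ+) →₀ ℕ) → ((Y × ℕ+) →₀ ℕ) → Prop)
    (G : Set (PL K Y)) : Ideal (PL K Y) :=
  Ideal.span {p | ∃ g ∈ G, g ≠ 0 ∧ ∃ m, IsLM K r g m ∧
    ∃ k : ℕ, p = MvPolynomial.monomial (shiftMon k m) (1 : K)}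

/-- `G ⊆ I` is a Gröbner `ℕ`-basis of the ℕ-ideal `I`: `ℕ·lm(G)` generates `LM(I)`. -/
def IsGroebnerNB {Y : Type*} (r : ((Y × ℕ+) →₀ ℕ) → ((Y × ℕ+) →₀ ℕ) → Prop)
    (I : Ideal (PL K Y)) (G : Set (PL K Y)) : Prop :=
  G ⊆ (I : Set (PL K Y)) ∧ shLMideal K r G = LMideal K r (I : Set (PL K Y))

/-- `G` is a Gröbner `L`-basis of the letterplace ideal `J`: `G ⊆ J ∩ L` and the leading monomial
of every nonzero multilinear element of `J` is divisible by a shift of some `lm(g)`, `g ∈ G`. -/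
def IsGroebnerLB {Y : Type*} (r : ((Y × ℕ+) →₀ ℕ) → ((Y × ℕ+) →₀ ℕ) → Prop)
    (J : Ideal (PL K Y)) (G : Set (PL K Y)) : Prop :=
  G ⊆ (J : Set (PL K Y)) ∩ Lset K ∧
  ∀ f ∈ (J : Set (PL K Y)) ∩ Lset K, f ≠ 0 →
    ∃ g ∈ G, ∃ (k : ℕ) (mg mf : (Y × ℕ+) →₀ ℕ),
      IsLM K r g mg ∧ IsLM K r f mf ∧ shiftMon k mg ≤ mf

/-- `w` is the leading monomial (word) of `f ∈ K⟨Y⟩` with respect to the word ordering `r'`. -/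
def IsLMF {Y : Type*} (r' : FreeMonoid Y → FreeMonoid Y → Prop)
    (f : FA K Y) (w : FreeMonoid Y) : Prop :=
  w ∈ f.coeff.support ∧ ∀ w' ∈ f.coeff.support, w' ≠ w → r' w' w

/-- `G ⊆ I` is a Gröbner basis of the two-sided ideal `I ⊆ K⟨Y⟩`: the leading word of every
nonzero `f ∈ I` has the form `u · lm(g) · v` for some nonzero `g ∈ G`. -/
def IsGroebnerBF {Y : Type*} (r' : FreeMonoid Y → FreeMonoid Y → Prop)
    (I : TwoSidedIdeal (FA K Y)) (G : Set (FA K Y)) : Prop :=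
  G ⊆ (I : Set (FA K Y)) ∧
  ∀ f ∈ I, f ≠ 0 → ∃ g ∈ G, g ≠ 0 ∧ ∃ (u v wf wg : FreeMonoid Y),
    IsLMF K r' f wf ∧ IsLMF K r' g wg ∧ wf = u * wg * v

/-! ### Normal forms -/

/-- The generators `x_i(1) x_j(1)` of `N`. -/
def Ngens (Y : Type*) : Set (PL K Y) :=
  {g | ∃ i j : Y, g = MvPolynomial.X (i, (1 : ℕ+)) * MvPolynomial.X (j, (1 : ℕ+))}

/-- A polynomial is in normal form modulo `N` iff in each of its monomials all place indices
are pairwise distinct. -/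
def NormalModN {Y : Type*} (f : PL K Y) : Prop :=
  ∀ m ∈ f.support, ∀ k : ℕ+, placeDeg m k ≤ 1

/-- A polynomial is in normal form modulo `D` iff none of its monomials is divisible by a shift
of the leading monomial of some generator `t(1)x_i(2) − x_i(1)t(2)` of `D`. -/
def NormalModD {X : Type*} (r : (((Option X) × ℕ+) →₀ ℕ) → (((Option X) × ℕ+) →₀ ℕ) → Prop)
    (f : PL K (Option X)) : Prop :=
  ∀ m ∈ f.support, ∀ g ∈ DgensT K X, ∀ mg, IsLM K r g mg → ∀ k : ℕ, ¬ shiftMon k mg ≤ m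

/-- `G` is a Gröbner `L`-basis of `J` modulo `D`: its elements are multilinear elements of `J`
in normal form modulo `D`, and together with the generators of `D` they form a
Gröbner `L`-basis of `J`. -/
def IsGroebnerLBmodD {X : Type*}
    (r : (((Option X) × ℕ+) →₀ ℕ) → (((Option X) × ℕ+) →₀ ℕ) → Prop)
    (J : Ideal (PL K (Option X))) (G : Set (PL K (Option X))) : Prop :=
  (∀ g ∈ G, g ∈ (J : Set (PL K (Option X))) ∩ Lset K ∧ NormalModD K r g) ∧
  IsGroebnerLB K r J (G ∪ DgensT K X)

/-- The commutators `[t, x_i] = t x_i − x_i t` in `F̄`. -/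
def commGens (X : Type*) : Set (FA K (Option X)) :=
  {h | ∃ x : X, h = tv K * gen K (some x) - gen K (some x) * tv K}

/-- A polynomial of `F̄` is in normal form modulo `C` iff none of its words contains the leading
word of some commutator `[t, x_i]` as a factor. -/
def NormalModC {X : Type*} (r' : FreeMonoid (Option X) → FreeMonoid (Option X) → Prop)
    (f : FA K (Option X)) : Prop :=
  ∀ w ∈ f.coeff.support, ∀ g ∈ commGens K X, ∀ wg, IsLMF K r' g wg →
    ¬ ∃ u v, w = u * wg * v

/-! ### Concrete orderings on words -/

/-- The order on the letters of `X ∪ {t}` (with `X = ℕ`): `t ≺ x_1 ≺ x_2 ≺ ⋯`. -/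
def optLt : Option ℕ → Option ℕ → Prop
  | none, some _ => True
  | some i, some j => i < j
  | _, none => False

/-- The graded right lexicographic ordering on words: first compare lengths, then compare
letter by letter from the right. -/
def grRightLex {Y : Type*} (lt : Y → Y → Prop) (dflt : Y) (m n : FreeMonoid Y) : Prop :=
  FreeMonoid.length m < FreeMonoid.length n ∨
  (FreeMonoid.length m = FreeMonoid.length n ∧
    ∃ t < FreeMonoid.length m,
      lt ((FreeMonoid.toList m).getD t dflt) ((FreeMonoid.toList n).getD t dflt) ∧
      ∀ s, t < s → (FreeMonoid.toList m).getD s dflt = (FreeMonoid.toList n).getD s dflt)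

end

/-!
Modulo the commutators `[x_i, t]` the letter `t` is central, so every word `w` is congruent to
`t^k q(w)`, where `q(w) = φ(w)` is `w` with its `t`'s deleted and `k = |w| - |q(w)|`. If `f` is
homogeneous of degree `d`, then `k = d - |q(w)|` depends on `q(w)` alone, so `f` is congruent to
the image of `φ(f)` under the linear map `v ↦ t^(d - |v|) v`, which is `0` when `φ(f) = 0`.
Conversely, each commutator is homogeneous of degree 2 and killed by `φ`.
-/

open MonoidAlgebra

section DeleteT

variable {X : Type*}

def deleteT : FreeMonoid (Option X) →* FreeMonoid (Option X) :=
  FreeMonoid.lift fun o => o.elim 1 fun x => FreeMonoid.of (some x)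

@[simp]
lemma deleteT_of_none : deleteT (FreeMonoid.of (none : Option X)) = 1 := rfl

@[simp]
lemma deleteT_of_some (x : X) : deleteT (FreeMonoid.of (some x)) = FreeMonoid.of (some x) := rfl

lemma length_deleteT_le (w : FreeMonoid (Option X)) : (deleteT w).length ≤ w.length := by
  induction w using FreeMonoid.inductionOn' with
  | one => simp
  | of_mul a w ih => cases a <;> simp [FreeMonoid.length_mul] <;> omega

def tsToFront (w : FreeMonoid (Option X)) : FreeMonoid (Option X) :=
  FreeMonoid.of none ^ (w.length - (deleteT w).length) * deleteT w

lemma map_tsToFront {M : Type*} [Monoid M] (ρ : FreeMonoid (Option X) →* M)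
    (hρ : ∀ x, Commute (ρ (FreeMonoid.of none)) (ρ (FreeMonoid.of (some x))))
    (w : FreeMonoid (Option X)) : ρ (tsToFront w) = ρ w := by
  induction w using FreeMonoid.inductionOn' with
  | one => simp [tsToFront]
  | of_mul a w ih =>
    have hle := length_deleteT_le w
    simp only [tsToFront, map_mul, map_pow] at ih ⊢
    cases a with
    | none =>
      have hexp : 1 + w.length - (deleteT w).length = w.length - (deleteT w).length + 1 := by
        omega
      rw [deleteT_of_none, map_one, one_mul, FreeMonoid.length_mul, FreeMonoid.length_of,
        one_mul, hexp, pow_succ', mul_assoc, ih]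
    | some x =>
      rw [deleteT_of_some, FreeMonoid.length_mul, FreeMonoid.length_mul, FreeMonoid.length_of,
        Nat.add_sub_add_left, ← mul_assoc, ((hρ x).pow_left _).eq, mul_assoc, ih]

end DeleteT

section Algebra

variable {K : Type*} [Field K] {X : Type*}

lemma phi_eq_mapDomainAlgHom : phi K = mapDomainAlgHom K K (deleteT (X := X)) := by
  refine algHom_ext' (FreeMonoid.hom_eq fun o => ?_) (Subsingleton.elim _ _)
  cases o <;> simp [phi, gen, one_def]

lemma phi_apply (f : FA K (Option X)) : phi K f = mapDomain deleteT f := by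
  rw [phi_eq_mapDomainAlgHom, mapDomainAlgHom_apply]

lemma map_mapDomain_of_forall {R M S : Type*} [Semiring R] [Monoid M] [Semiring S]
    (π : R[M] →+* S) {θ : M → M} (h : ∀ m, π (of R M (θ m)) = π (of R M m)) (x : R[M]) :
    π (mapDomain θ x) = π x := by
  induction x using induction_linear with
  | zero => simp
  | add x y hx hy => rw [mapDomain_add, map_add, map_add, hx, hy]
  | single m r =>
    have hs : ∀ n : M, single n r = single 1 r * of R M n := fun n => by
      simp [of_apply, single_mul_single]
    rw [mapDomain_single, hs (θ m), hs m, map_mul, map_mul, h]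

lemma IsHomog.sub {Y : Type*} {d : ℕ} {f g : FA K Y} (hf : IsHomog K d f) (hg : IsHomog K d g) :
    IsHomog K d (f - g) := fun w hw => by
  classical
  rw [coeff_sub] at hw
  rcases Finset.mem_union.mp (Finsupp.support_sub hw) with h | h
  exacts [hf w h, hg w h]

lemma isHomog_of {Y : Type*} (w : FreeMonoid Y) : IsHomog K w.length (of K (FreeMonoid Y) w) :=
  fun v hv => by
    rw [of_apply, coeff_single] at hv
    rw [Finset.mem_singleton.mp (Finsupp.support_single_subset hv)]

end Algebra

section CommutatorIdeal

variable (K : Type*) [Field K] (X : Type*)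

noncomputable def tCommIdeal : TwoSidedIdeal (FA K (Option X)) :=
  TwoSidedIdeal.span {g | ∃ x : X, g = gen K (some x) * tv K - tv K * gen K (some x)}

variable {K X}

lemma commute_mk_tv (x : X) :
    Commute (Ideal.Quotient.mk (tCommIdeal K X).asIdeal (tv K))
      (Ideal.Quotient.mk (tCommIdeal K X).asIdeal (gen K (some x))) := by
  have hx : gen K (some x) * tv K - tv K * gen K (some x) ∈ (tCommIdeal K X).asIdeal :=
    TwoSidedIdeal.subset_span ⟨x, rfl⟩
  rw [← Ideal.Quotient.eq_zero_iff_mem, map_sub, map_mul, map_mul, sub_eq_zero] at hx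
  exact hx.symm

lemma mk_mapDomain_tsToFront (f : FA K (Option X)) :
    Ideal.Quotient.mk (tCommIdeal K X).asIdeal (mapDomain tsToFront f) =
      Ideal.Quotient.mk (tCommIdeal K X).asIdeal f :=
  map_mapDomain_of_forall _
    (map_tsToFront ((Ideal.Quotient.mk (tCommIdeal K X).asIdeal).toMonoidHom.comp (of K _))
      commute_mk_tv) f

lemma mapDomain_tsToFront_of_isHomog {d : ℕ} {f : FA K (Option X)} (hf : IsHomog K d f) :
    mapDomain tsToFront f =
      mapDomain (fun v => FreeMonoid.of none ^ (d - v.length) * v) (phi K f) := by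
  rw [phi_apply]
  simp only [mapDomain, coeff_ofCoeff]
  rw [← Finsupp.mapDomain_comp]
  congr 1
  exact Finsupp.mapDomain_congr fun w hw => by simp [tsToFront, hf w hw]

lemma mem_tCommIdeal_of_isHomog {d : ℕ} {f : FA K (Option X)} (hf : IsHomog K d f)
    (hφ : phi K f = 0) : f ∈ tCommIdeal K X := by
  rw [← TwoSidedIdeal.mem_asIdeal, ← Ideal.Quotient.eq_zero_iff_mem, ← mk_mapDomain_tsToFront,
    mapDomain_tsToFront_of_isHomog hf, hφ, mapDomain_zero, map_zero]

lemma commutator_mem_cideal (x : X) :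
    gen K (some x) * tv K - tv K * gen K (some x) ∈ Cideal K := by
  refine TwoSidedIdeal.subset_span ⟨⟨2, ?_⟩, ?_⟩
  · simp only [gen, tv, ← map_mul]
    exact (isHomog_of _).sub (isHomog_of _)
  · simp [phi, gen, tv]

end CommutatorIdeal

theorem statement_0_general (K : Type*) [Field K] (X : Type*) :
    Cideal K (X := X) =
      TwoSidedIdeal.span {g | ∃ x : X, g = gen K (some x) * tv K - tv K * gen K (some x)} :=
  le_antisymm
    (TwoSidedIdeal.span_le.mpr fun _ ⟨⟨_, hf⟩, hφ⟩ => mem_tCommIdeal_of_isHomog hf hφ)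
    (TwoSidedIdeal.span_le.mpr fun _ ⟨x, hg⟩ => hg ▸ commutator_mem_cideal x)

/-- The largest graded two-sided ideal `C` contained in `ker φ` (generated by
all homogeneous elements killed by `φ`) is generated, as a two-sided ideal, by the commutators
`[x_i, t] = x_i t − t x_i`. -/
theorem statement_0 (K : Type*) [Field K] (X : Type*) [Countable X] :
    Cideal K (X := X) =
      TwoSidedIdeal.span {g | ∃ x : X, g = gen K (some x) * tv K - tv K * gen K (some x)} :=
  statement_0_general K X
end

section
/- For every graded two-sided ideal J of F̄ with C ⊆ J, the saturation is Sat(J) = {f ∈ F̄ : t^i f ∈ J for some i ≥ 0}. -/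
/-!
Since `t` commutes with every element modulo `C ⊆ J`, the elements `f` with `t^i f ∈ J` for
some `i` form a two-sided ideal, so it suffices to treat a generator `g` of `Sat(J)`: homogeneous
of degree `d`, with `φ(g) = φ(h)` for some `h ∈ J`. As `J` is graded, it contains the
homogenization `H = Σ_e t^(D-e) h_e` of `h`, where `D = deg h`. Now `t^D g` and `t^d H` are
homogeneous of the same degree with the same image under `φ`, so their difference lies in
`C ⊆ J`, whence `t^D g ∈ J`. Conversely, if `t^i f ∈ J` then each `t^i f_d` is a homogeneous
component of `t^i f`, hence lies in `J`, and has the same image under `φ` as `f_d`.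
-/

namespace TwoSidedIdeal

variable {R : Type*} [Ring R] {J : TwoSidedIdeal R} {t : R}

lemma pow_mul_sub_mul_pow_mem (ht : ∀ a, t * a - a * t ∈ J) (a : R) (i : ℕ) :
    t ^ i * a - a * t ^ i ∈ J := by
  induction i with
  | zero => simp [J.zero_mem]
  | succ n ih =>
    have hsplit : t ^ (n + 1) * a - a * t ^ (n + 1)
        = t * (t ^ n * a - a * t ^ n) + (t * a - a * t) * t ^ n := by
      rw [pow_succ']; noncomm_ring
    rw [hsplit]
    exact J.add_mem (J.mul_mem_left _ _ ih) (J.mul_mem_right _ _ (ht a))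

def powColon (J : TwoSidedIdeal R) (t : R) (ht : ∀ a, t * a - a * t ∈ J) : TwoSidedIdeal R :=
  .mk' {g | ∃ i, t ^ i * g ∈ J} ⟨0, by simp [J.zero_mem]⟩
    (by
      rintro x y ⟨i, hi⟩ ⟨j, hj⟩
      refine ⟨i + j, ?_⟩
      have hsplit : t ^ (i + j) * (x + y) = t ^ j * (t ^ i * x) + t ^ i * (t ^ j * y) := by
        rw [mul_add, ← mul_assoc, ← mul_assoc, ← pow_add, ← pow_add, add_comm j i]
      rw [hsplit]
      exact J.add_mem (J.mul_mem_left _ _ hi) (J.mul_mem_left _ _ hj))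
    (by
      rintro x ⟨i, hi⟩
      exact ⟨i, by rw [mul_neg]; exact J.neg_mem hi⟩)
    (by
      rintro x y ⟨i, hi⟩
      refine ⟨i, ?_⟩
      have hsplit : t ^ i * (x * y) = (t ^ i * x - x * t ^ i) * y + x * (t ^ i * y) := by
        noncomm_ring
      rw [hsplit]
      exact J.add_mem (J.mul_mem_right _ _ (pow_mul_sub_mul_pow_mem ht x i))
        (J.mul_mem_left _ _ hi))
    (by
      rintro x y ⟨i, hi⟩
      exact ⟨i, by rw [← mul_assoc]; exact J.mul_mem_right _ _ hi⟩)

lemma mem_powColon (ht : ∀ a, t * a - a * t ∈ J) {g : R} :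
    g ∈ J.powColon t ht ↔ ∃ i, t ^ i * g ∈ J :=
  TwoSidedIdeal.mem_mk' _ _ _ _ _ _ g

end TwoSidedIdeal

lemma FreeMonoid.length_pow {α : Type*} (a : FreeMonoid α) (n : ℕ) :
    (a ^ n).length = n * a.length := by
  induction n with
  | zero => rw [pow_zero, FreeMonoid.length_one, zero_mul]
  | succ n ih => rw [pow_succ, FreeMonoid.length_mul, ih, Nat.succ_mul]

section FreeAlgebra

open MonoidAlgebra

variable {K : Type*} [Field K] {Y : Type*}

lemma coeff_homComp (d : ℕ) (f : FA K Y) (w : FreeMonoid Y) :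
    (homComp K d f).coeff w = if FreeMonoid.length w = d then f.coeff w else 0 := by
  classical
  simp only [homComp, coeff_sum, coeff_single, Finsupp.finsetSum_apply, Finsupp.single_apply,
    Finset.sum_ite_eq', Finset.mem_filter, Finsupp.mem_support_iff]
  by_cases h : f.coeff w = 0 <;> simp [h]

lemma isHomog_homComp (d : ℕ) (f : FA K Y) : IsHomog K d (homComp K d f) := by
  intro w hw
  rw [Finsupp.mem_support_iff, coeff_homComp] at hw
  by_contra h
  exact hw (if_neg h)

lemma sum_homComp (f : FA K Y) : ∑ d ∈ Finset.range (degF K f + 1), homComp K d f = f :=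
  (Finset.sum_fiberwise_of_maps_to
    (fun _ hw => Finset.mem_range.mpr (Nat.lt_succ_of_le (Finset.le_sup hw)))
    (fun w => single w (f.coeff w))).trans f.sum_coeff_single

lemma IsHomog.mul {d e : ℕ} {a b : FA K Y} (ha : IsHomog K d a) (hb : IsHomog K e b) :
    IsHomog K (d + e) (a * b) := by
  classical
  intro w hw
  obtain ⟨u, hu, v, hv, rfl⟩ := Finset.mem_mul.mp (support_coeff_mul_subset a b hw)
  rw [FreeMonoid.length_mul, ha u hu, hb v hv]

lemma IsHomog.sub_s3 {d : ℕ} {a b : FA K Y} (ha : IsHomog K d a) (hb : IsHomog K d b) :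
    IsHomog K d (a - b) := by
  classical
  intro w hw
  rw [coeff_sub] at hw
  rcases Finset.mem_union.mp (Finsupp.support_sub hw) with hw | hw
  exacts [ha w hw, hb w hw]

lemma IsHomog.sum {ι : Type*} {d : ℕ} {s : Finset ι} {g : ι → FA K Y}
    (hg : ∀ e ∈ s, IsHomog K d (g e)) : IsHomog K d (∑ e ∈ s, g e) := by
  classical
  intro w hw
  rw [coeff_sum] at hw
  obtain ⟨e, he, hw⟩ := Finset.mem_biUnion.mp (Finsupp.support_finsetSum hw)
  exact hg e he w hw

variable {X : Type*}

lemma tv_pow (i : ℕ) : (tv K : FA K (Option X)) ^ i = single (FreeMonoid.of none ^ i) 1 := by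
  rw [tv, gen, of_apply, single_pow, one_pow]

lemma isHomog_tv_pow (i : ℕ) : IsHomog K i (tv K ^ i : FA K (Option X)) := by
  intro w hw
  rw [tv_pow, coeff_single] at hw
  rw [Finset.mem_singleton.mp (Finsupp.support_single_subset hw), FreeMonoid.length_pow,
    FreeMonoid.length_of, mul_one]

lemma homComp_tv_pow_mul (i d : ℕ) (f : FA K (Option X)) :
    homComp K (i + d) (tv K ^ i * f) = tv K ^ i * homComp K d f := by
  ext w
  rw [tv_pow]
  by_cases hw : ∃ v, w = FreeMonoid.of none ^ i * v
  · obtain ⟨v, rfl⟩ := hw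
    simp only [coeff_homComp, coeff_single_mul_mul, FreeMonoid.length_mul, FreeMonoid.length_pow,
      FreeMonoid.length_of, mul_one, Nat.add_left_cancel_iff, one_mul]
  · have hne : ∀ v, FreeMonoid.of none ^ i * v ≠ w := fun v h => hw ⟨v, h.symm⟩
    rw [coeff_homComp, coeff_single_mul_of_forall_mul_ne _ _ hne,
      coeff_single_mul_of_forall_mul_ne _ _ hne, ite_self]

lemma phi_tv : phi K (tv K : FA K (Option X)) = 1 := by
  simp [phi, tv, gen]

lemma phi_tv_pow_mul (i : ℕ) (a : FA K (Option X)) : phi K (tv K ^ i * a) = phi K a := by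
  rw [map_mul, map_pow, phi_tv, one_pow, one_mul]

lemma mem_Cideal_of_isHomog {d : ℕ} {f : FA K (Option X)} (hf : IsHomog K d f)
    (h0 : phi K f = 0) : f ∈ Cideal K :=
  TwoSidedIdeal.subset_span ⟨⟨d, hf⟩, h0⟩

lemma tv_mul_sub_mul_tv_mem_Cideal (a : FA K (Option X)) : tv K * a - a * tv K ∈ Cideal K := by
  rw [← sum_homComp a, Finset.mul_sum, Finset.sum_mul, ← Finset.sum_sub_distrib]
  refine sum_mem fun d _ => mem_Cideal_of_isHomog (d := 1 + d) ?_ ?_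
  · have htv : IsHomog K 1 (tv K : FA K (Option X)) := by simpa using isHomog_tv_pow (K := K) 1
    have hd := isHomog_homComp (K := K) d a
    exact (htv.mul hd).sub_s3 (add_comm d 1 ▸ hd.mul htv)
  · rw [map_sub, map_mul, map_mul, phi_tv, one_mul, mul_one, sub_self]

lemma tv_pow_degF_mul_mem {J : TwoSidedIdeal (FA K (Option X))} (hJ : IsGradedF K J)
    (hC : Cideal K ≤ J) {d : ℕ} {g h : FA K (Option X)} (hg : IsHomog K d g) (hh : h ∈ J)
    (hgh : phi K g = phi K h) : tv K ^ degF K h * g ∈ J := by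
  set D := degF K h
  set H := ∑ e ∈ Finset.range (D + 1), tv K ^ (D - e) * homComp K e h
  have hHJ : H ∈ J := sum_mem fun e _ => J.mul_mem_left _ _ (hJ h hh e)
  have hHhom : IsHomog K D H := IsHomog.sum fun e he => by
    have hDe := (isHomog_tv_pow (D - e)).mul (isHomog_homComp e h)
    rwa [Nat.sub_add_cancel (Nat.lt_succ_iff.mp (Finset.mem_range.mp he))] at hDe
  have hHphi : phi K H = phi K g := by
    simp only [H, map_sum, phi_tv_pow_mul]
    rw [← map_sum, sum_homComp, hgh]
  have hdiff : tv K ^ D * g - tv K ^ d * H ∈ J := by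
    refine hC (mem_Cideal_of_isHomog ((isHomog_tv_pow D).mul hg |>.sub ?_) ?_)
    · exact add_comm d D ▸ (isHomog_tv_pow d).mul hHhom
    · rw [map_sub, phi_tv_pow_mul, phi_tv_pow_mul, hHphi, sub_self]
  simpa using J.add_mem hdiff (J.mul_mem_left (tv K ^ d) _ hHJ)

end FreeAlgebra

theorem statement_3_general (K : Type*) [Field K] (X : Type*)
    (J : TwoSidedIdeal (FA K (Option X))) (hJ : IsGradedF K J) (hC : Cideal K ≤ J) :
    ∀ f : FA K (Option X), f ∈ SatF K J ↔ ∃ i : ℕ, (tv K) ^ i * f ∈ J := by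
  intro f
  constructor
  · intro hf
    have htv : ∀ a, tv K * a - a * tv K ∈ J := fun a => hC (tv_mul_sub_mul_tv_mem_Cideal a)
    have hsat : SatF K J ≤ J.powColon (tv K) htv := by
      refine TwoSidedIdeal.span_le.mpr ?_
      rintro g ⟨⟨d, hg⟩, h, hh, hgh⟩
      exact (TwoSidedIdeal.mem_powColon htv).mpr ⟨_, tv_pow_degF_mul_mem hJ hC hg hh hgh⟩
    exact (TwoSidedIdeal.mem_powColon htv).mp (hsat hf)
  · rintro ⟨i, hi⟩
    rw [← sum_homComp f]
    refine sum_mem fun d _ => TwoSidedIdeal.subset_span ?_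
    refine ⟨⟨d, isHomog_homComp d f⟩, _, hJ _ hi (i + d), ?_⟩
    rw [homComp_tv_pow_mul, phi_tv_pow_mul]

/-- For every graded two-sided ideal `J ⊆ F̄` with `C ⊆ J`,
`Sat(J) = {f ∈ F̄ : t^i f ∈ J for some i ≥ 0}`. -/
theorem statement_3 (K : Type*) [Field K] (X : Type*) [Countable X]
    (J : TwoSidedIdeal (FA K (Option X))) (hJ : IsGradedF K J) (hC : Cideal K ≤ J) :
    ∀ f : FA K (Option X), f ∈ SatF K J ↔ ∃ i : ℕ, (tv K) ^ i * f ∈ J :=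
  statement_3_general K X J hJ hC
end

section
/- For every ℕ-ideal I of P, the multihomogenization I^* equals the ideal of P̄ generated by the set {f^* : f ∈ I, f ≠ 0}. -/
/-! A multihomogeneous `g ∈ P̄` of multidegree `μ` is determined by `ψ(g)`: a monomial of
multidegree `μ` is recovered from its `x`-part by filling in the missing places with `t`'s.
Hence if `ψ(g) = f ∈ I`, then `g = ∏_k t(k)^{μ_k − ν_k} · f^*` with `ν = ∂(f)`. Since the shifts
preserve multihomogeneity and commute with `ψ`, and `I` is an ℕ-ideal, every generator of `I^*`
is of this form; conversely each `f^*` is a multihomogeneous preimage of `f`. -/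

section Multihomogenization

open MvPolynomial

variable {K : Type*} [Field K] {X : Type*}

abbrev optVar (p : X × ℕ+) : Option X × ℕ+ := (some p.1, p.2)

lemma optVar_injective : Function.Injective (optVar (X := X)) := by
  rintro ⟨a, i⟩ ⟨b, j⟩ h
  simp_all [optVar]

def xPart (n : (Option X × ℕ+) →₀ ℕ) : (Option X × ℕ+) →₀ ℕ :=
  n.filter fun p => p.1.isSome

lemma placeDeg_add {Y : Type*} (a b : (Y × ℕ+) →₀ ℕ) :
    placeDeg (a + b) = placeDeg a + placeDeg b :=
  Finsupp.mapDomain_add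

lemma tExp_add (a b : ℕ+ →₀ ℕ) : tExp (X := X) (a + b) = tExp a + tExp b :=
  Finsupp.mapDomain_add

lemma placeDeg_tExp (ν : ℕ+ →₀ ℕ) : placeDeg (tExp (X := X) ν) = ν := by
  rw [placeDeg, tExp, ← Finsupp.mapDomain_comp]
  exact Finsupp.mapDomain_id

lemma placeDeg_mapDomain_optVar (m : (X × ℕ+) →₀ ℕ) :
    placeDeg (m.mapDomain optVar) = placeDeg m := by
  rw [placeDeg, ← Finsupp.mapDomain_comp]
  rfl

lemma xPart_add (a b : (Option X × ℕ+) →₀ ℕ) : xPart (a + b) = xPart a + xPart b :=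
  Finsupp.filter_add

lemma xPart_mapDomain_optVar (m : (X × ℕ+) →₀ ℕ) :
    xPart (m.mapDomain optVar) = m.mapDomain optVar := by
  classical
  rw [xPart, Finsupp.filter_eq_self_iff]
  intro p hp
  obtain ⟨q, -, rfl⟩ :=
    Finset.mem_image.mp (Finsupp.mapDomain_support (Finsupp.mem_support_iff.mpr hp))
  rfl

lemma xPart_tExp (ν : ℕ+ →₀ ℕ) : xPart (tExp (X := X) ν) = 0 := by
  rw [xPart, Finsupp.filter_eq_zero_iff]
  intro p hp
  rw [tExp, Finsupp.mapDomain_of_notMem_range]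
  rintro ⟨k, rfl⟩
  simp at hp

lemma tExp_placeDeg_filter_not_isSome (n : (Option X × ℕ+) →₀ ℕ) :
    tExp (placeDeg (n.filter fun p => ¬ p.1.isSome)) = n.filter fun p => ¬ p.1.isSome := by
  rw [tExp, placeDeg, ← Finsupp.mapDomain_comp]
  refine (Finsupp.mapDomain_congr fun p hp => ?_).trans Finsupp.mapDomain_id
  rw [Finsupp.support_filter, Finset.mem_filter, Option.not_isSome_iff_eq_none] at hp
  exact Prod.ext hp.2.symm rfl

lemma placeDeg_xPart_add_placeDeg_filter (n : (Option X × ℕ+) →₀ ℕ) :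
    placeDeg (xPart n) + placeDeg (n.filter fun p => ¬ p.1.isSome) = placeDeg n := by
  rw [← placeDeg_add, xPart, Finsupp.filter_add_filter_not]

lemma placeDeg_xPart_le (n : (Option X × ℕ+) →₀ ℕ) : placeDeg (xPart n) ≤ placeDeg n :=
  (placeDeg_xPart_add_placeDeg_filter n).symm ▸ le_self_add

lemma eq_xPart_add_tExp {μ : ℕ+ →₀ ℕ} {n : (Option X × ℕ+) →₀ ℕ} (h : placeDeg n = μ) :
    n = xPart n + tExp (μ - placeDeg (xPart n)) := by
  have htPart : μ - placeDeg (xPart n) = placeDeg (n.filter fun p => ¬ p.1.isSome) := by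
    rw [← h, ← placeDeg_xPart_add_placeDeg_filter, add_tsub_cancel_left]
  rw [htPart, tExp_placeDeg_filter_not_isSome, xPart, Finsupp.filter_add_filter_not]

lemma eq_of_xPart_eq {μ : ℕ+ →₀ ℕ} {n n' : (Option X × ℕ+) →₀ ℕ} (h : placeDeg n = μ)
    (h' : placeDeg n' = μ) (hx : xPart n = xPart n') : n = n' := by
  rw [eq_xPart_add_tExp h, eq_xPart_add_tExp h', hx]

lemma psi_monomial (n : (Option X × ℕ+) →₀ ℕ) (c : K) :
    psi K (monomial n c) = monomial (xPart n) c := by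
  have hx : (xPart n).prod
      (fun p e => (Option.elim p.1 1 fun x => MvPolynomial.X (some x, p.2)) ^ e) =
      monomial (xPart n) (1 : K) := by
    rw [monomial_eq, C_1, one_mul]
    refine Finsupp.prod_congr fun p hp => ?_
    rw [xPart, Finsupp.support_filter, Finset.mem_filter, Option.isSome_iff_exists] at hp
    obtain ⟨x, hx⟩ := hp.2
    rw [show p = (some x, p.2) from Prod.ext hx rfl]
    rfl
  have ht : (n.filter fun p => ¬ p.1.isSome).prod
      (fun p e =>
        (Option.elim p.1 1 fun x => (MvPolynomial.X (some x, p.2) : PL K (Option X))) ^ e) =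
      1 := by
    refine Finset.prod_eq_one fun p hp => ?_
    rw [Finsupp.support_filter, Finset.mem_filter, Option.not_isSome_iff_eq_none] at hp
    simp only [hp.2, Option.elim_none, one_pow]
  rw [psi, aeval_monomial, ← Finsupp.prod_filter_mul_prod_filter_not (fun p => p.1.isSome),
    ← xPart, hx, ht, mul_one, algebraMap_eq, C_mul_monomial, mul_one]

lemma psi_eq_sum (g : PL K (Option X)) :
    psi K g = ∑ n ∈ g.support, monomial (xPart n) (coeff n g) := by
  conv_lhs => rw [← support_sum_monomial_coeff g]
  simp only [map_sum, psi_monomial]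

lemma IsMultiHomog.coeff_xPart_psi {μ : ℕ+ →₀ ℕ} {g : PL K (Option X)}
    {n : (Option X × ℕ+) →₀ ℕ} (hg : IsMultiHomog K μ g) (hn : placeDeg n = μ) :
    coeff (xPart n) (psi K g) = coeff n g := by
  classical
  rw [psi_eq_sum, coeff_sum, Finset.sum_eq_single n]
  · rw [coeff_monomial, if_pos rfl]
  · intro n' hn' hne
    rw [coeff_monomial, if_neg fun hx => hne (eq_of_xPart_eq (hg n' hn') hn hx)]
  · intro hn'
    rw [notMem_support_iff.mp hn', monomial_zero, coeff_zero]

lemma IsMultiHomog.eq_of_psi_eq {μ : ℕ+ →₀ ℕ} {g₁ g₂ : PL K (Option X)}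
    (h₁ : IsMultiHomog K μ g₁) (h₂ : IsMultiHomog K μ g₂) (h : psi K g₁ = psi K g₂) :
    g₁ = g₂ := by
  ext n
  by_cases hn : placeDeg n = μ
  · rw [← h₁.coeff_xPart_psi hn, ← h₂.coeff_xPart_psi hn, h]
  · rw [notMem_support_iff.mp fun hm => hn (h₁ n hm),
      notMem_support_iff.mp fun hm => hn (h₂ n hm)]

lemma IsMultiHomog.placeDeg_le_of_mem_support_psi {μ : ℕ+ →₀ ℕ} {g : PL K (Option X)}
    {m : (Option X × ℕ+) →₀ ℕ} (hg : IsMultiHomog K μ g) (hm : m ∈ (psi K g).support) :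
    placeDeg m ≤ μ := by
  classical
  rw [psi_eq_sum] at hm
  obtain ⟨n, hn, hmn⟩ := Finset.mem_biUnion.mp (support_sum hm)
  rw [Finset.mem_singleton.mp (support_monomial_subset hmn), ← hg n hn]
  exact placeDeg_xPart_le n

lemma isMultiHomog_zero {Y : Type*} (μ : ℕ+ →₀ ℕ) : IsMultiHomog K μ (0 : PL K Y) := by
  simp [IsMultiHomog]

/-- `f^*` padded with `t`'s up to multidegree `μ`; meant for `μ ≥ ∂(f)`, as the subtraction
truncates. -/
noncomputable def mhstarAt (μ : ℕ+ →₀ ℕ) (f : PL K X) : PL K (Option X) :=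
  ∑ m ∈ f.support, monomial (m.mapDomain optVar + tExp (μ - placeDeg m)) (coeff m f)

lemma mhstar_eq_mhstarAt (f : PL K X) : mhstar K f = mhstarAt (topDeg K f) f := rfl

lemma isMultiHomog_mhstarAt {μ : ℕ+ →₀ ℕ} {f : PL K X}
    (hf : ∀ m ∈ f.support, placeDeg m ≤ μ) : IsMultiHomog K μ (mhstarAt μ f) := by
  classical
  intro n hn
  obtain ⟨m, hm, hnm⟩ := Finset.mem_biUnion.mp (support_sum hn)
  rw [Finset.mem_singleton.mp (support_monomial_subset hnm), placeDeg_add,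
    placeDeg_mapDomain_optVar, placeDeg_tExp, add_tsub_cancel_of_le (hf m hm)]

lemma psi_mhstarAt (μ : ℕ+ →₀ ℕ) (f : PL K X) : psi K (mhstarAt μ f) = embP K f := by
  conv_rhs => rw [← support_sum_monomial_coeff f]
  simp only [mhstarAt, embP, map_sum, psi_monomial, rename_monomial, xPart_add,
    xPart_mapDomain_optVar, xPart_tExp, add_zero]

lemma monomial_tExp_mul_mhstarAt {μ ν : ℕ+ →₀ ℕ} {f : PL K X}
    (hf : ∀ m ∈ f.support, placeDeg m ≤ ν) (hνμ : ν ≤ μ) :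
    monomial (tExp (μ - ν)) 1 * mhstarAt ν f = mhstarAt μ f := by
  rw [mhstarAt, mhstarAt, Finset.mul_sum]
  refine Finset.sum_congr rfl fun m hm => ?_
  rw [monomial_mul, one_mul, add_left_comm, ← tExp_add, tsub_add_tsub_cancel hνμ (hf m hm)]

end Multihomogenization

section Shift

open MvPolynomial

variable {K : Type*} [Field K] {X : Type*}

def shiftPlace (k : ℕ) (j : ℕ+) : ℕ+ := ⟨j + k, Nat.add_pos_left j.2 k⟩

lemma shift_zero_apply {Y : Type*} (g : PL K Y) : shift K 0 g = g :=
  rename_id_apply g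

lemma shiftVar_injective {Y : Type*} (k : ℕ) : Function.Injective (shiftVar (Y := Y) k) := by
  intro p q h
  obtain ⟨h₁, h₂⟩ := Prod.ext_iff.mp h
  exact Prod.ext h₁ (PNat.coe_injective (Nat.add_right_cancel (congrArg Subtype.val h₂)))

lemma IsMultiHomog.shift {Y : Type*} {μ : ℕ+ →₀ ℕ} {g : PL K Y} (hg : IsMultiHomog K μ g)
    (k : ℕ) : IsMultiHomog K (μ.mapDomain (shiftPlace k)) (shift K k g) := by
  classical
  intro m hm
  rw [_root_.shift, support_rename_of_injective (shiftVar_injective k), Finset.mem_image] at hm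
  obtain ⟨m, hm, rfl⟩ := hm
  rw [← hg m hm, placeDeg, placeDeg, ← Finsupp.mapDomain_comp, ← Finsupp.mapDomain_comp]
  rfl

lemma psi_shift (k : ℕ) (g : PL K (Option X)) :
    psi K (shift K k g) = shift K k (psi K g) := by
  suffices (psi K).comp (shift K k) = (shift K k).comp (psi K) from AlgHom.congr_fun this g
  apply algHom_ext
  rintro ⟨_ | x, j⟩ <;> simp [psi, shift, shiftVar]

lemma embP_shift (k : ℕ) (f : PL K X) : embP K (shift K k f) = shift K k (embP K f) := by
  simp only [embP, shift, rename_rename]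
  rfl

end Shift

open MvPolynomial in
lemma mem_span_mhstar_of_psi_eq_embP {K : Type*} [Field K] {X : Type*} {I : Ideal (PL K X)}
    {μ : ℕ+ →₀ ℕ} {g : PL K (Option X)} {f : PL K X} (hg : IsMultiHomog K μ g) (hf : f ∈ I)
    (hψ : psi K g = embP K f) : g ∈ Ideal.span {g | ∃ f ∈ I, f ≠ 0 ∧ g = mhstar K f} := by
  classical
  by_cases hf0 : f = 0
  · rw [hg.eq_of_psi_eq (isMultiHomog_zero μ) (by rw [hψ, hf0, map_zero, map_zero])]
    exact Ideal.zero_mem _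
  have hle : ∀ m ∈ f.support, placeDeg m ≤ μ := fun m hm => by
    have hm' : m.mapDomain optVar ∈ (psi K g).support := by
      rw [hψ, embP, support_rename_of_injective optVar_injective]
      exact Finset.mem_image_of_mem _ hm
    simpa only [placeDeg_mapDomain_optVar] using hg.placeDeg_le_of_mem_support_psi hm'
  have htop : ∀ m ∈ f.support, placeDeg m ≤ topDeg K f := fun m hm => Finset.le_sup hm
  have hg_eq : g = monomial (tExp (μ - topDeg K f)) 1 * mhstar K f := by
    rw [mhstar_eq_mhstarAt, monomial_tExp_mul_mhstarAt htop (Finset.sup_le hle)]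
    exact hg.eq_of_psi_eq (isMultiHomog_mhstarAt hle) (by rw [hψ, psi_mhstarAt])
  rw [hg_eq]
  exact Ideal.mul_mem_left _ _ (Ideal.subset_span ⟨f, hf, hf0, rfl⟩)

theorem statement_4_general (K : Type*) [Field K] (X : Type*)
    (I : Ideal (PL K X)) (hI : IsNIdeal K I) :
    mhstarIdeal K I = Ideal.span {g | ∃ f ∈ I, f ≠ 0 ∧ g = mhstar K f} := by
  apply le_antisymm
  · refine Ideal.span_le.mpr ?_
    rintro _ ⟨k, g, ⟨⟨μ, hg⟩, f, hf, hψ⟩, rfl⟩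
    exact mem_span_mhstar_of_psi_eq_embP (hg.shift k) (hI k f hf)
      (by rw [psi_shift, hψ, embP_shift])
  · refine Ideal.span_le.mpr ?_
    rintro _ ⟨f, hf, -, rfl⟩
    have hf_star : IsMultiHomog K (topDeg K f) (mhstar K f) :=
      isMultiHomog_mhstarAt fun m hm => Finset.le_sup hm
    exact Ideal.subset_span
      ⟨0, mhstar K f, ⟨⟨_, hf_star⟩, f, hf, psi_mhstarAt _ f⟩, (shift_zero_apply _).symm⟩

/-- For every ℕ-ideal `I ⊆ P`, the multihomogenization `I^*` equals the ideal
of `P̄` generated by `{f^* : 0 ≠ f ∈ I}`. -/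
theorem statement_4 (K : Type*) [Field K] (X : Type*) [Countable X]
    (I : Ideal (PL K X)) (hI : IsNIdeal K I) :
    mhstarIdeal K I = Ideal.span {g | ∃ f ∈ I, f ≠ 0 ∧ g = mhstar K f} :=
  statement_4_general K X I hI
end
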